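/- Let G be a connected graph on n vertices, x a vertex of G with exactly three neighbors, y and z two distinct neighbors of x, and c ≥ 0 an integer; let G' be the associated terminal-augmented graph with terminals s and t. Then every st-path P in G' with |N_{G'}(V(P))| ≤ c satisfies V(G) ⊆ V(P). -/

import Mathlib

open SimpleGraph

/-- The open neighborhood of a vertex set `S`: vertices outside `S` adjacent to some
vertex of `S`. -/
def openNbhd {V : Type*} (G : SimpleGraph V) (S : Set V) : Set V :=
  {v | v ∉ S ∧ ∃ w ∈ S, G.Adj v w}

/-- The terminal-augmented graph `G'` of `(G, x, y, z, c)`: a new vertex `s`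
(modelled as `Sum.inr (Sum.inl ())`) adjacent exactly to `x`, a new vertex `t`
(modelled as `Sum.inr (Sum.inr (Sum.inl ()))`) adjacent exactly to `y` and `z`,
and `c` new vertices (the set `Z`, modelled as `Sum.inr (Sum.inr (Sum.inr i))`)
each adjacent exactly to `s`. -/
def termAug {V : Type*} (G : SimpleGraph V) (x y z : V) (c : ℕ) :
    SimpleGraph (V ⊕ (Unit ⊕ Unit ⊕ Fin c)) :=
  SimpleGraph.fromRel (fun a b =>
    match a, b with
    | Sum.inl v, Sum.inl w => G.Adj v w
    | Sum.inl v, Sum.inr (Sum.inl _) => v = x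
    | Sum.inl v, Sum.inr (Sum.inr (Sum.inl _)) => v = y ∨ v = z
    | Sum.inr (Sum.inl _), Sum.inr (Sum.inr (Sum.inr _)) => True
    | _, _ => False)

/-- The terminal `s` of the terminal-augmented graph. -/
def sVert (V : Type*) (c : ℕ) : V ⊕ (Unit ⊕ Unit ⊕ Fin c) := Sum.inr (Sum.inl ())

/-- The terminal `t` of the terminal-augmented graph. -/
def tVert (V : Type*) (c : ℕ) : V ⊕ (Unit ⊕ Unit ⊕ Fin c) := Sum.inr (Sum.inr (Sum.inl ()))

/-- `G` has a Hamiltonian cycle. -/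
def HasHamiltonianCycle {V : Type*} [DecidableEq V] (G : SimpleGraph V) : Prop :=
  ∃ (v : V) (p : G.Walk v v), p.IsHamiltonianCycle

/-!
A vertex of `Z` has `s` as its only neighbour, so it cannot be an inner vertex of an `st`-path;
hence all `c` vertices of `Z` lie in `N(V(P))`. The bound `|N(V(P))| ≤ c` then leaves no room for
a vertex of `G` in `N(V(P))`, so `V(P) ∩ V(G)` is closed under adjacency in `G`. It contains `x`,
the neighbour of `s`, and `G` is connected.
-/

namespace SimpleGraph

variable {V : Type*} {G : SimpleGraph V}

lemma Preconnected.forall_mem_of_adj_closed (hG : G.Preconnected) {T : Set V} {x : V}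
    (hx : x ∈ T) (hT : ∀ u w, G.Adj u w → u ∈ T → w ∈ T) (v : V) : v ∈ T := by
  obtain ⟨q⟩ := hG x v
  induction q with
  | nil => exact hx
  | cons h _ ih => exact ih (hT _ _ h hx)

/-- The successor of `w` on the path is such a neighbour: a path does not revisit its start. -/
lemma Walk.IsPath.exists_adj_ne_start {u v w : V} {p : G.Walk u v} (hp : p.IsPath)
    (hw : w ∈ p.support) (hwv : w ≠ v) : ∃ w', G.Adj w w' ∧ w' ≠ u := by
  obtain ⟨i, rfl, hi⟩ := Walk.mem_support_iff_exists_getVert.mp hw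
  have hi : i < p.length := lt_of_le_of_ne hi (by rintro rfl; exact hwv p.getVert_length)
  refine ⟨p.getVert (i + 1), p.adj_getVert_succ hi, fun h => ?_⟩
  have h0 : p.getVert (i + 1) = p.getVert 0 := h.trans p.getVert_zero.symm
  exact Nat.succ_ne_zero i (hp.getVert_injOn (Set.mem_ofPred.mpr hi) (Nat.zero_le _) h0)

lemma mem_of_notMem_openNbhd {S : Set V} {v w : V} (hv : v ∉ openNbhd G S) (hw : w ∈ S)
    (hvw : G.Adj v w) : v ∈ S :=
  by_contra fun hvS => hv ⟨hvS, w, hw, hvw⟩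

end SimpleGraph

section termAug

variable {V : Type*} (G : SimpleGraph V) (x y z : V) (c : ℕ)

def zVert (V : Type*) {c : ℕ} (i : Fin c) : V ⊕ (Unit ⊕ Unit ⊕ Fin c) :=
  Sum.inr (Sum.inr (Sum.inr i))

lemma zVert_injective : Function.Injective (zVert V : Fin c → _) := by
  intro i j h
  simpa [zVert] using h

lemma termAug_adj_zVert_iff (a : V ⊕ (Unit ⊕ Unit ⊕ Fin c)) (i : Fin c) :
    (termAug G x y z c).Adj a (zVert V i) ↔ a = sVert V c := by
  rcases a with v | u | u | j <;> simp [termAug, fromRel_adj, sVert, zVert]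

lemma termAug_inl_adj_sVert_iff (v : V) :
    (termAug G x y z c).Adj (Sum.inl v) (sVert V c) ↔ v = x := by
  simp [termAug, fromRel_adj, sVert]

lemma termAug_inl_adj_inl_iff (v w : V) :
    (termAug G x y z c).Adj (Sum.inl v) (Sum.inl w) ↔ G.Adj v w := by
  simp only [termAug, fromRel_adj, ne_eq, Sum.inl.injEq]
  exact ⟨fun ⟨_, h⟩ => h.elim id (fun h => h.symm), fun h => ⟨h.ne, Or.inl h⟩⟩

variable {G x y z c}
variable {p : (termAug G x y z c).Walk (sVert V c) (tVert V c)}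

lemma zVert_notMem_support (hp : p.IsPath) (i : Fin c) : zVert V i ∉ p.support := by
  intro hi
  obtain ⟨w, hw, hws⟩ := hp.exists_adj_ne_start hi (by simp [zVert, tVert])
  exact hws ((termAug_adj_zVert_iff G x y z c w i).mp hw.symm)

lemma range_zVert_subset_openNbhd (hp : p.IsPath) :
    Set.range (zVert V) ⊆ openNbhd (termAug G x y z c) {a | a ∈ p.support} := by
  rintro _ ⟨i, rfl⟩
  exact ⟨zVert_notMem_support hp i, sVert V c, p.start_mem_support,
    ((termAug_adj_zVert_iff G x y z c _ i).mpr rfl).symm⟩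

lemma inl_notMem_openNbhd [Fintype V] (hp : p.IsPath)
    (hnb : (openNbhd (termAug G x y z c) {a | a ∈ p.support}).ncard ≤ c) (v : V) :
    Sum.inl v ∉ openNbhd (termAug G x y z c) {a | a ∈ p.support} := by
  have hZ : (Set.range (zVert V (c := c))).ncard = c := by
    rw [Set.ncard_range_of_injective (zVert_injective c), Nat.card_eq_fintype_card,
      Fintype.card_fin]
  rw [← Set.eq_of_subset_of_ncard_le (range_zVert_subset_openNbhd hp) (hnb.trans hZ.ge)]
  rintro ⟨i, hi⟩
  exact Sum.inr_ne_inl hi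

end termAug

theorem stmt_5_general {V : Type*} [Fintype V] (G : SimpleGraph V)
    (hG : G.Connected) (x y z : V) (c : ℕ)
    (p : (termAug G x y z c).Walk (sVert V c) (tVert V c)) (hp : p.IsPath)
    (hnb : (openNbhd (termAug G x y z c) {a | a ∈ p.support}).ncard ≤ c) :
    ∀ v : V, Sum.inl v ∈ p.support := by
  have hout := inl_notMem_openNbhd hp hnb
  have hx : Sum.inl x ∈ p.support :=
    mem_of_notMem_openNbhd (S := {a | a ∈ p.support}) (hout x) p.start_mem_support
      ((termAug_inl_adj_sVert_iff G x y z c x).mpr rfl)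
  refine hG.preconnected.forall_mem_of_adj_closed (T := {v | Sum.inl v ∈ p.support}) hx ?_
  intro u w huw hu
  exact mem_of_notMem_openNbhd (S := {a | a ∈ p.support}) (hout w) hu
    ((termAug_inl_adj_inl_iff G x y z c w u).mpr huw.symm)

/-- Every `st`-path `P` in the terminal-augmented graph `G'` with
`|N_{G'}(V(P))| ≤ c` satisfies `V(G) ⊆ V(P)`. -/
theorem stmt_5 {V : Type*} [Fintype V] (G : SimpleGraph V)
    (hG : G.Connected) (x y z : V) (hx : (G.neighborSet x).ncard = 3)
    (hy : G.Adj x y) (hz : G.Adj x z) (hyz : y ≠ z) (c : ℕ)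
    (p : (termAug G x y z c).Walk (sVert V c) (tVert V c)) (hp : p.IsPath)
    (hnb : (openNbhd (termAug G x y z c) {a | a ∈ p.support}).ncard ≤ c) :
    ∀ v : V, Sum.inl v ∈ p.support :=
  stmt_5_general G hG x y z c p hp hnb
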